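/- Let n ≥ 2 and g ≥ 1 with g ∣ n. Let f(i) = g·⌊i/g⌋ + ((i mod g + 1) mod g) and P_g(i)(j) = ((i + j) mod g + g·⌊i/g⌋ + g·⌊j/g⌋) mod n. Then P_g(f(i))(j) = f(P_g(i)(j)) for every i ∈ {0,…,n−1} and every j ∈ {1,…,n−1}. (This is the claim in the proof of the paper's Lemma 5 that the isomorphism f preserves port numbers: if node i is connected to node p at its port j, then f(i) is connected to f(p) at its port j.) -/
import Mathlib


open MeasureTheory Filter
open scoped ENNReal

theorem shift_lt {n g i : ℕ} (hg : 0 < g) (hgn : g ∣ n) (hi : i < n) :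
    g * (i / g) + ((i % g + 1) % g) < n := by
  have h1 : (i % g + 1) % g < g := Nat.mod_lt _ hg
  have h2 : i / g < n / g := Nat.div_lt_div_of_lt_of_dvd hgn hi
  calc g * (i / g) + ((i % g + 1) % g)
      < g * (i / g) + g := by omega
    _ = g * (i / g + 1) := (Nat.mul_succ g _).symm
    _ ≤ g * (n / g) := Nat.mul_le_mul_left _ h2
    _ = n := Nat.mul_div_cancel' hgn

/-- The shift permutation `f` of Lemma 5: `f i = g⌊i/g⌋ + ((i mod g + 1) mod g)`. -/
def shiftF (n g : ℕ) (hg : 0 < g) (hgn : g ∣ n) : Fin n → Fin n :=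
  fun i => ⟨g * ((i : ℕ) / g) + (((i : ℕ) % g + 1) % g), shift_lt hg hgn i.isLt⟩

/-- The port assignment `P_g` of Lemma 5: node `i`'s port `j ∈ {1,…,n-1}` (represented by
`j : Fin (n-1)`, standing for the port number `(j : ℕ) + 1`) is connected to node
`((i + j) mod g + g⌊i/g⌋ + g⌊j/g⌋) mod n`. -/
def portG (n g : ℕ) (hn : 0 < n) : Fin n → Fin (n - 1) → Fin n :=
  fun i j =>
    ⟨(((i : ℕ) + ((j : ℕ) + 1)) % g + g * ((i : ℕ) / g) + g * (((j : ℕ) + 1) / g)) % n,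
      Nat.mod_lt _ hn⟩
lemma my_key_mod (g k m c : ℕ) (hg : 0 < g) (hk : 0 < k) (hc : c < g) :
    (g * (m / g) + c) % (g * k) = g * (m % (g * k) / g) + c := by
  rw [Nat.mod_mul_right_div_self]
  set x := m / g with hx
  have hdm : k * (x / k) + x % k = x := Nat.div_add_mod x k
  have h2 : g * x + c = g * (x % k) + c + g * k * (x / k) := by
    conv_lhs => rw [← hdm]
    ring
  rw [h2, Nat.add_mul_mod_self_left]
  apply Nat.mod_eq_of_lt
  have hxk : x % k < k := Nat.mod_lt _ hk
  have h3 : g * (x % k + 1) ≤ g * k := Nat.mul_le_mul_left g (by omega)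
  have h4 : g * (x % k + 1) = g * (x % k) + g := Nat.mul_succ g _
  omega
/-- The shift permutation `f` preserves the port numbers of the assignment `P_g`:
`P_g (f i) j = f (P_g i j)` for every node `i` and every port `j`. -/
theorem shiftF_preserves_ports (n g : ℕ) (hn : 2 ≤ n) (hg : 0 < g) (hgn : g ∣ n) :
    ∀ (i : Fin n) (j : Fin (n - 1)),
      portG n g (by omega) (shiftF n g hg hgn i) j =
        shiftF n g hg hgn (portG n g (by omega) i j) := by
  intro i j
  obtain ⟨k, hk⟩ := hgn
  have hn0 : 0 < n := by omega
  have hk0 : 0 < k := by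
    rcases Nat.eq_zero_or_pos k with h | h
    · subst h; simp [hk] at hn0
    · exact h
  apply Fin.ext
  simp only [portG, shiftF]
  set i' := (i : ℕ)
  set j' := ((j : ℕ) + 1) with hj'
  set q := i' / g with hq
  set r := i' % g with hr
  set c := (r + 1) % g with hc
  have hcg : c < g := Nat.mod_lt _ hg
  have hfid : (g * q + c) / g = q := by
    rw [Nat.mul_add_div hg, Nat.div_eq_of_lt hcg, Nat.add_zero]
  have hfim : (g * q + c) % g = c := by
    rw [Nat.mul_add_mod, Nat.mod_eq_of_lt hcg]
  set a := (i' + j') % g with ha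
  have hag : a < g := Nat.mod_lt _ hg
  have hfj : (g * q + c + j') % g = (a + 1) % g := by
    conv_lhs => rw [Nat.add_mod, hfim, hc, Nat.mod_add_mod, Nat.add_mod_mod, hr,
      show i' % g + 1 + j' = i' % g + (1 + j') from by ring, Nat.mod_add_mod]
    conv_rhs => rw [ha, Nat.mod_add_mod]
    congr 1
    ring
  set m := a + g * q + g * (j' / g) with hm
  have hmq : m / g = q + j' / g := by
    rw [hm, show a + g * q + g * (j' / g) = g * (q + j' / g) + a from by ring,
      Nat.mul_add_div hg, Nat.div_eq_of_lt hag, Nat.add_zero]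
  have hmg : m % g = a := by
    rw [hm, show a + g * q + g * (j' / g) = g * (q + j' / g) + a from by ring,
      Nat.mul_add_mod, Nat.mod_eq_of_lt hag]
  have hmng : m % n % g = a := by rw [Nat.mod_mod_of_dvd _ ⟨k, hk⟩, hmg]
  have hlhs : (g * q + c + j') % g + g * ((g * q + c) / g) + g * (j' / g)
      = g * (m / g) + (a + 1) % g := by
    rw [hfj, hfid, hmq]; ring
  rw [hlhs, hk, my_key_mod g k m ((a + 1) % g) hg hk0 (Nat.mod_lt _ hg), ← hk, hmng]
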